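/- arXiv:math/0505663 — 3 statements merged into one kernel-verified Lean document; each statement's English description precedes it below -/
import Mathlib

section
/- Let g be a Lie algebra over a field k and r : g* → g a linear map that is skew-symmetric in the sense that α(r β) = −β(r α) for all α, β ∈ g*. Let ψ be an alternating trilinear form on g satisfying conditions (C1) and (C2). Then the bracket on g* defined by [α,β]_{r,ψ}(X) = α([r β, X]) − β([r α, X]) + ψ(r α, r β, X) is bilinear, alternating, and satisfies the Jacobi identity; i.e., it makes g* a Lie algebra. (This is the specialization to a Lie algebra, i.e. a Lie algebroid over a point, of the paper's Theorem that the dual A* of a Lie algebroid with a twisted Poisson structure (π, ψ) is a Lie algebroid with bracket [α,β]_{π,ψ} = [α,β]_π + ψ^{(2)}(α,β).) -/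
/-- The twisted bracket `[α,β]_{r,ψ}` on the dual of a Lie algebra:
`[α,β]_{r,ψ}(X) = α([r β, X]) − β([r α, X]) + ψ(r α, r β, X)`. -/
noncomputable def twistedBracket {k g : Type*} [Field k] [LieRing g] [LieAlgebra k g]
    (r : Module.Dual k g →ₗ[k] g) (ψ : g →ₗ[k] g →ₗ[k] g →ₗ[k] k)
    (α β : Module.Dual k g) : Module.Dual k g :=
  α ∘ₗ (LieAlgebra.ad k g (r β)) - β ∘ₗ (LieAlgebra.ad k g (r α)) + ψ (r α) (r β)

/-- If `r : g* → g` is skew-symmetric and `ψ` is an alternating trilinear form on `g`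
satisfying (C1) (closedness) and (C2) (the twisted Poisson condition), then the twisted
bracket `[α,β]_{r,ψ}` is bilinear, alternating and satisfies the Jacobi identity,
i.e. it makes `g*` a Lie algebra. -/
theorem twisted_dual_is_lie_algebra {k g : Type*} [Field k] [LieRing g] [LieAlgebra k g]
    (r : Module.Dual k g →ₗ[k] g)
    (hr : ∀ α β : Module.Dual k g, α (r β) = - β (r α))
    (ψ : g →ₗ[k] g →ₗ[k] g →ₗ[k] k)
    (hψ₁ : ∀ X Y : g, ψ X X Y = 0)
    (hψ₂ : ∀ X Y : g, ψ X Y Y = 0)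
    (hψ₃ : ∀ X Y : g, ψ X Y X = 0)
    (hC1 : ∀ X Y Z W : g,
      ψ ⁅X, Y⁆ Z W - ψ ⁅X, Z⁆ Y W + ψ ⁅X, W⁆ Y Z
        + ψ ⁅Y, Z⁆ X W - ψ ⁅Y, W⁆ X Z + ψ ⁅Z, W⁆ X Y = 0)
    (hC2 : ∀ α β γ : Module.Dual k g,
      γ ⁅r α, r β⁆ + α ⁅r β, r γ⁆ + β ⁅r γ, r α⁆ = - ψ (r α) (r β) (r γ)) :
    (∀ α α' β : Module.Dual k g,
        twistedBracket r ψ (α + α') β = twistedBracket r ψ α β + twistedBracket r ψ α' β)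
    ∧ (∀ (c : k) (α β : Module.Dual k g),
        twistedBracket r ψ (c • α) β = c • twistedBracket r ψ α β)
    ∧ (∀ α β β' : Module.Dual k g,
        twistedBracket r ψ α (β + β') = twistedBracket r ψ α β + twistedBracket r ψ α β')
    ∧ (∀ (c : k) (α β : Module.Dual k g),
        twistedBracket r ψ α (c • β) = c • twistedBracket r ψ α β)
    ∧ (∀ α : Module.Dual k g, twistedBracket r ψ α α = 0)
    ∧ (∀ α β γ : Module.Dual k g,
        twistedBracket r ψ (twistedBracket r ψ α β) γ
          + twistedBracket r ψ (twistedBracket r ψ β γ) α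
          + twistedBracket r ψ (twistedBracket r ψ γ α) β = 0) := by

  classical
  -- evaluation formula for the twisted bracket
  have ev : ∀ (α β : Module.Dual k g) (X : g),
      twistedBracket r ψ α β X = α ⁅r β, X⁆ - β ⁅r α, X⁆ + ψ (r α) (r β) X := by
    intro α β X
    simp [twistedBracket, LieAlgebra.ad_apply]
  -- antisymmetry of ψ in first two arguments
  have s12 : ∀ X Y Z : g, ψ X Y Z = - ψ Y X Z := by
    intro X Y Z
    have h := hψ₁ (X + Y) Z
    simp [map_add, hψ₁] at h
    linear_combination h
  -- cyclic invariance
  have s23 : ∀ X Y Z : g, ψ X Y Z = - ψ X Z Y := by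
    intro X Y Z
    have h' : ψ X (Y + Z) (Y + Z) = 0 := hψ₂ X (Y + Z)
    simp [map_add, hψ₂] at h'
    linear_combination h'
  have cyc : ∀ X Y Z : g, ψ X Y Z = ψ Z X Y := by
    intro X Y Z
    rw [s23 X Y Z, s12 X Z Y]
    ring
  -- r intertwines the twisted bracket with the Lie bracket
  have rKey : ∀ α β : Module.Dual k g,
      r (twistedBracket r ψ α β) = ⁅r α, r β⁆ := by
    intro α β
    rw [← sub_eq_zero, ← Module.forall_dual_apply_eq_zero_iff k]
    intro γ
    have h1 : γ (r (twistedBracket r ψ α β)) = - twistedBracket r ψ α β (r γ) := hr γ _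
    have h2 := hC2 α β γ
    have h3 : β ⁅r α, r γ⁆ = - β ⁅r γ, r α⁆ := by rw [← lie_skew, map_neg]
    rw [map_sub, h1, ev]
    linear_combination -h2 + h3
  refine ⟨?_, ?_, ?_, ?_, ?_, ?_⟩
  · intro α α' β
    ext X
    simp [ev, map_add, add_lie]
    ring
  · intro c α β
    ext X
    simp [ev, map_smul, smul_lie]
    ring
  · intro α β β'
    ext X
    simp [ev, map_add, add_lie]
    ring
  · intro c α β
    ext X
    simp [ev, map_smul, smul_lie]
    ring
  · intro α
    ext X
    simp [ev, hψ₁]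
  · intro α β γ
    ext X
    simp only [LinearMap.add_apply, LinearMap.zero_apply]
    simp only [ev, rKey]
    set a := r α
    set b := r β
    set c := r γ
    have hJα : α ⁅⁅b,c⁆, X⁆ = α ⁅b, ⁅c, X⁆⁆ - α ⁅c, ⁅b, X⁆⁆ := by
      rw [lie_lie, map_sub]
    have hJβ : β ⁅⁅c,a⁆, X⁆ = β ⁅c, ⁅a, X⁆⁆ - β ⁅a, ⁅c, X⁆⁆ := by
      rw [lie_lie, map_sub]
    have hJγ : γ ⁅⁅a,b⁆, X⁆ = γ ⁅a, ⁅b, X⁆⁆ - γ ⁅b, ⁅a, X⁆⁆ := by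
      rw [lie_lie, map_sub]
    have h := hC1 a b c X
    have e1 : ψ ⁅a,c⁆ b X = - ψ ⁅c,a⁆ b X := by
      rw [← lie_skew a c, map_neg, LinearMap.neg_apply, LinearMap.neg_apply]
    have e2 : ψ ⁅a,X⁆ b c = ψ b c ⁅a,X⁆ := by rw [cyc, cyc]
    have e3 : ψ ⁅b,X⁆ a c = - ψ c a ⁅b,X⁆ := by rw [cyc, cyc, s12]
    have e4 : ψ ⁅c,X⁆ a b = ψ a b ⁅c,X⁆ := by rw [cyc, cyc]
    linear_combination -hJα - hJβ - hJγ + h + e1 - e2 + e3 - e4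
end

section
/- Let g be a Lie algebra over a field k and r : g* → g a linear map that is skew-symmetric in the sense that α(r β) = −β(r α) for all α, β ∈ g*. Let ψ be an alternating trilinear form on g satisfying condition (C2). Then r intertwines the twisted bracket on g* with the Lie bracket of g: for all α, β ∈ g*, r([α,β]_{r,ψ}) = [r α, r β]. (This is the paper's assertion that π♯ satisfies π♯[α,β]_{π,ψ} = [π♯α, π♯β], specialized to a Lie algebroid over a point.) -/
/-- If `r : g* → g` is skew-symmetric and `ψ` is an alternating trilinear form on `g`
satisfying condition (C2), then `r` intertwines the twisted bracket on `g*` with the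
Lie bracket of `g`: `r [α,β]_{r,ψ} = [r α, r β]`. -/
theorem r_intertwines_twisted_bracket {k g : Type*} [Field k] [LieRing g] [LieAlgebra k g]
    (r : Module.Dual k g →ₗ[k] g)
    (hr : ∀ α β : Module.Dual k g, α (r β) = - β (r α))
    (ψ : g →ₗ[k] g →ₗ[k] g →ₗ[k] k)
    (hψ₁ : ∀ X Y : g, ψ X X Y = 0)
    (hψ₂ : ∀ X Y : g, ψ X Y Y = 0)
    (hψ₃ : ∀ X Y : g, ψ X Y X = 0)
    (hC2 : ∀ α β γ : Module.Dual k g,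
      γ ⁅r α, r β⁆ + α ⁅r β, r γ⁆ + β ⁅r γ, r α⁆ = - ψ (r α) (r β) (r γ)) :
    ∀ α β : Module.Dual k g, r (twistedBracket r ψ α β) = ⁅r α, r β⁆ := by
  intro α β
  rw [← sub_eq_zero, ← Module.forall_dual_apply_eq_zero_iff k]
  intro γ
  have h1 : γ (r (twistedBracket r ψ α β)) = - (twistedBracket r ψ α β) (r γ) := hr γ _
  have h2 := hC2 α β γ
  have h3 : β ⁅r γ, r α⁆ = - β ⁅r α, r γ⁆ := by rw [← lie_skew, map_neg]
  simp only [twistedBracket, LinearMap.add_apply, LinearMap.sub_apply, LinearMap.coe_comp,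
    Function.comp_apply, LieAlgebra.ad_apply] at h1
  simp only [twistedBracket, map_sub]
  linear_combination h1 - h2 + h3
end

section
/- Let R be a commutative ring, A a commutative R-algebra, and u an R-linear endomorphism of A. Then u is of order ≤ 2 (i.e., [[[u, ℓ_a], ℓ_b], ℓ_c] = 0 for all a, b, c ∈ A) if and only if Φ³_u = 0, i.e., Φ²_u(a)(bc) = Φ²_u(a)(b)·c + b·Φ²_u(a)(c) for all a, b, c ∈ A. -/
/-- The commutator of two linear endomorphisms. -/
def opComm {R A : Type*} [CommRing R] [CommRing A] [Algebra R A]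
    (u v : A →ₗ[R] A) : A →ₗ[R] A := u ∘ₗ v - v ∘ₗ u

/-- `u` is of order `≤ 2` if `[[[u, ℓ_a], ℓ_b], ℓ_c] = 0` for all `a, b, c`. -/
def IsOrderLeTwo {R A : Type*} [CommRing R] [CommRing A] [Algebra R A]
    (u : A →ₗ[R] A) : Prop :=
  ∀ a b c : A, opComm (opComm (opComm u (LinearMap.mulLeft R a)) (LinearMap.mulLeft R b))
    (LinearMap.mulLeft R c) = 0

/-- `Φ¹_u(a) = u(a) − u(1)·a`. -/
def Phi1 {R A : Type*} [CommRing R] [CommRing A] [Algebra R A]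
    (u : A →ₗ[R] A) (a : A) : A := u a - u 1 * a

/-- `Φ²_u(a)(b) = Φ¹_u(ab) − Φ¹_u(a)·b − a·Φ¹_u(b)`. -/
def Phi2 {R A : Type*} [CommRing R] [CommRing A] [Algebra R A]
    (u : A →ₗ[R] A) (a b : A) : A := Phi1 u (a * b) - Phi1 u a * b - a * Phi1 u b

lemma opComm_triple_apply {R A : Type*} [CommRing R] [CommRing A] [Algebra R A]
    (u : A →ₗ[R] A) (a b c x : A) :
    opComm (opComm (opComm u (LinearMap.mulLeft R a)) (LinearMap.mulLeft R b))
      (LinearMap.mulLeft R c) x =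
    (Phi2 u a (b * (c * x)) - Phi2 u a b * (c * x) - b * Phi2 u a (c * x))
      - c * (Phi2 u a (b * x) - Phi2 u a b * x - b * Phi2 u a x) := by
  simp only [opComm, Phi2, Phi1, LinearMap.sub_apply, LinearMap.comp_apply,
    LinearMap.mulLeft_apply]
  ring_nf

lemma phi3_one {R A : Type*} [CommRing R] [CommRing A] [Algebra R A]
    (u : A →ₗ[R] A) (a b : A) :
    Phi2 u a (b * 1) - Phi2 u a b * 1 - b * Phi2 u a 1 = 0 := by
  simp only [Phi2, Phi1]
  ring_nf

/-- `u` is of order `≤ 2` if and only if `Φ³_u = 0`, i.e.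
`Φ²_u(a)(bc) = Φ²_u(a)(b)·c + b·Φ²_u(a)(c)` for all `a, b, c`. -/
theorem isOrderLeTwo_iff_phi3_eq_zero {R A : Type*} [CommRing R] [CommRing A] [Algebra R A]
    (u : A →ₗ[R] A) :
    IsOrderLeTwo u ↔ ∀ a b c : A, Phi2 u a (b * c) = Phi2 u a b * c + b * Phi2 u a c := by
  constructor
  · intro h a b c
    have hx := opComm_triple_apply u a b c 1
    rw [h a b c] at hx
    simp only [LinearMap.zero_apply, mul_one] at hx
    have h1 := phi3_one u a b
    simp only [mul_one] at h1
    rw [h1, mul_zero, sub_zero] at hx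
    have : Phi2 u a (b * c) - Phi2 u a b * c - b * Phi2 u a c = 0 := hx.symm
    linear_combination this
  · intro h a b c
    ext x
    rw [opComm_triple_apply u a b c x]
    have h1 := h a b (c * x)
    have h2 := h a b x
    simp only [LinearMap.zero_apply]
    linear_combination h1 - c * h2
end
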